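/- For every integer n ≥ 1 there exists a unique K_c > 0 such that cosh((n+1)K_c) = 2^{n/2} (cosh K_c)^{n+1}; equivalently, x_0(K_c) = x_0^*(K_c), where x_0(K) = cosh((n+1)K)/cosh K and x_0^*(K) = 2^{-n/2}(e^K + e^{-K})^n are the principal edge Boltzmann factor and its dual on the Nishimori line. -/

import Mathlib

open Real

/-- The principal edge Boltzmann factor on the Nishimori line,
`x_0(K) = cosh((n+1)K) / cosh K`. -/
noncomputable def x0NL (n : ℕ) (K : ℝ) : ℝ := cosh (((n : ℝ) + 1) * K) / cosh K

/-- The principal dual edge Boltzmann factor on the Nishimori line,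
`x_0^*(K) = 2^{-n/2} (e^K + e^{-K})^n`. -/
noncomputable def x0StarNL (n : ℕ) (K : ℝ) : ℝ :=
  (2 : ℝ) ^ (-(n : ℝ) / 2) * (exp K + exp (-K)) ^ n

/-!
With `c = n + 1` the equation says `g K = (n / 2) log 2`, where
`g K = log cosh (c K) - c log cosh K`. Now `g 0 = 0`, `g' K = c (tanh (c K) - tanh K) > 0` for
`K > 0`, and `g K → (c - 1) log 2 = n log 2` because `log cosh x = x - log 2 + o(1)`; so the
value `(n / 2) log 2` is attained exactly once on `(0, ∞)`. The reformulation as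
`x_0 = x_0^*` is just `e^K + e^{-K} = 2 cosh K`.
-/

open Filter Set Topology

theorem Real.tanh_lt_tanh {x y : ℝ} (h : x < y) : tanh x < tanh y := by
  have mem : ∀ z, tanh z ∈ Ioo (-1) 1 := fun z => ⟨neg_one_lt_tanh z, tanh_lt_one z⟩
  rwa [← artanh_lt_artanh_iff (mem x) (mem y), artanh_tanh, artanh_tanh]

theorem Real.hasDerivAt_log_cosh (x : ℝ) : HasDerivAt (fun x => log (cosh x)) (tanh x) x := by
  simpa only [tanh_eq_sinh_div_cosh] using (hasDerivAt_cosh x).log (cosh_pos x).ne'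

theorem Real.tendsto_log_cosh_sub_atTop :
    Tendsto (fun x => log (cosh x) - x) atTop (𝓝 (-log 2)) := by
  have key : ∀ x, log (cosh x) - x = log ((1 + exp (-2 * x)) / 2) := fun x => by
    have hcosh : cosh x = exp x * ((1 + exp (-2 * x)) / 2) := by
      have hinv : exp x * exp (-x) = 1 := by rw [← exp_add, add_neg_cancel, exp_zero]
      rw [cosh_eq, show -2 * x = -x + -x by ring, exp_add]
      linear_combination (-exp (-x) / 2) * hinv
    rw [hcosh, log_mul (exp_pos x).ne' (by positivity), log_exp]
    ring
  have hexp : Tendsto (fun x : ℝ => exp (-2 * x)) atTop (𝓝 0) :=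
    tendsto_exp_atBot.comp (tendsto_id.const_mul_atTop_of_neg (by norm_num))
  have hlim : Tendsto (fun x : ℝ => (1 + exp (-2 * x)) / 2) atTop (𝓝 (1 / 2)) := by
    simpa using (hexp.const_add 1).div_const 2
  simp only [key]
  rw [← log_inv, ← one_div]
  exact (continuousAt_log (by norm_num)).tendsto.comp hlim

noncomputable def logCoshGap (c K : ℝ) : ℝ := log (cosh (c * K)) - c * log (cosh K)

section logCoshGap

variable {c : ℝ}

theorem hasDerivAt_logCoshGap (c x : ℝ) :
    HasDerivAt (logCoshGap c) (c * (tanh (c * x) - tanh x)) x := by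
  have inner := (hasDerivAt_log_cosh (c * x)).comp x ((hasDerivAt_id x).const_mul c)
  exact (inner.sub ((hasDerivAt_log_cosh x).const_mul c)).congr_deriv (by ring)

theorem continuous_logCoshGap (c : ℝ) : Continuous (logCoshGap c) :=
  continuous_iff_continuousAt.2 fun x => (hasDerivAt_logCoshGap c x).continuousAt

@[simp]
theorem logCoshGap_zero (c : ℝ) : logCoshGap c 0 = 0 := by
  simp [logCoshGap]

theorem strictMonoOn_logCoshGap (hc : 1 < c) : StrictMonoOn (logCoshGap c) (Ici 0) := by
  refine strictMonoOn_of_deriv_pos (convex_Ici 0) (continuous_logCoshGap c).continuousOn ?_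
  intro x hx
  rw [interior_Ici, mem_Ioi] at hx
  rw [(hasDerivAt_logCoshGap c x).deriv]
  have : tanh x < tanh (c * x) := tanh_lt_tanh (by nlinarith)
  exact mul_pos (by linarith) (by linarith)

/-- Since `log cosh x = x - log 2 + o(1)`,
`logCoshGap c K = (c K - log 2) - c (K - log 2) + o(1)`. -/
theorem tendsto_logCoshGap_atTop (hc : 0 < c) :
    Tendsto (logCoshGap c) atTop (𝓝 ((c - 1) * log 2)) := by
  have outer := tendsto_log_cosh_sub_atTop.comp (tendsto_id.const_mul_atTop hc)
  convert outer.sub (tendsto_log_cosh_sub_atTop.const_mul c) using 1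
  · ext K
    simp only [logCoshGap, Function.comp_apply, id]
    ring
  · ring_nf

theorem existsUnique_logCoshGap_eq (hc : 1 < c) {t : ℝ} (ht₀ : 0 < t)
    (ht : t < (c - 1) * log 2) : ∃! K, 0 < K ∧ logCoshGap c K = t := by
  obtain ⟨K₁, hK₁, hK₁_nonneg⟩ := ((tendsto_logCoshGap_atTop (by linarith)).eventually
    (lt_mem_nhds ht) |>.and (eventually_ge_atTop 0)).exists
  obtain ⟨K, hK, hKt⟩ := intermediate_value_Ioo hK₁_nonneg
    (continuous_logCoshGap c).continuousOn (by simpa using And.intro ht₀ hK₁)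
  refine ⟨K, ⟨hK.1, hKt⟩, fun K' ⟨hK', hK't⟩ => ?_⟩
  exact (strictMonoOn_logCoshGap hc).injOn hK'.le hK.1.le (hK't.trans hKt.symm)

theorem cosh_mul_eq_iff_logCoshGap_eq {a : ℝ} (ha : 0 < a) (c K : ℝ) :
    cosh (c * K) = a * cosh K ^ c ↔ logCoshGap c K = log a := by
  have hrhs : 0 < a * cosh K ^ c := by have := cosh_pos K; positivity
  rw [← log_injOn_pos.eq_iff (cosh_pos _) hrhs, log_mul ha.ne' (by positivity),
    log_rpow (cosh_pos K), logCoshGap]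
  constructor <;> intro h <;> linarith

end logCoshGap

theorem x0StarNL_eq (n : ℕ) (K : ℝ) : x0StarNL n K = 2 ^ ((n : ℝ) / 2) * cosh K ^ n := by
  have hsum : exp K + exp (-K) = 2 * cosh K := by rw [cosh_eq]; ring
  have hpow : (2 : ℝ) ^ (-(n : ℝ) / 2) * 2 ^ n = 2 ^ ((n : ℝ) / 2) := by
    rw [← rpow_natCast, ← rpow_add two_pos]
    ring_nf
  rw [x0StarNL, hsum, mul_pow, ← mul_assoc, hpow]

theorem x0NL_eq_x0StarNL_iff (n : ℕ) (K : ℝ) :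
    x0NL n K = x0StarNL n K ↔
      cosh (((n : ℝ) + 1) * K) = 2 ^ ((n : ℝ) / 2) * cosh K ^ (n + 1) := by
  rw [x0NL, x0StarNL_eq, div_eq_iff (cosh_pos K).ne', pow_succ, mul_assoc]

/-- Conjecture 1 of the paper: for every `n ≥ 1` there is a unique `K_c > 0` with
`cosh((n+1)K_c) = 2^{n/2} (cosh K_c)^{n+1}`; equivalently (for `K > 0`),
`x_0(K_c) = x_0^*(K_c)` on the Nishimori line. -/
theorem exists_unique_multicritical (n : ℕ) (hn : 1 ≤ n) :
    (∃! K : ℝ, 0 < K ∧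
      cosh (((n : ℝ) + 1) * K) = (2 : ℝ) ^ ((n : ℝ) / 2) * (cosh K) ^ (n + 1)) ∧
    (∀ K : ℝ, 0 < K →
      (cosh (((n : ℝ) + 1) * K) = (2 : ℝ) ^ ((n : ℝ) / 2) * (cosh K) ^ (n + 1) ↔
        x0NL n K = x0StarNL n K)) := by
  refine ⟨?_, fun K _ => (x0NL_eq_x0StarNL_iff n K).symm⟩
  have hn' : (1 : ℝ) ≤ n := by exact_mod_cast hn
  have hpow (K : ℝ) : cosh K ^ (n + 1) = cosh K ^ ((n : ℝ) + 1) := by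
    exact_mod_cast (rpow_natCast (cosh K) (n + 1)).symm
  simp only [hpow, cosh_mul_eq_iff_logCoshGap_eq (by positivity : (0 : ℝ) < 2 ^ ((n : ℝ) / 2)),
    log_rpow two_pos]
  have hlog2 := log_pos one_lt_two
  exact existsUnique_logCoshGap_eq (by linarith) (by positivity) (by nlinarith)
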